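/- Let ξ : Ω → ℝ^ℓ satisfy E‖ξ‖² < ∞ and suppose P(⟨p, ξ⟩ = 0) = 0 for every p ∈ ℝ^ℓ \ {0}. Then the map ζ(p) = E[1{⟨p, ξ⟩ ≥ 0} ⟨p, ξ⟩] is differentiable at every p ∈ ℝ^ℓ \ {0} with gradient ∇ζ(p) = E[ξ · 1{⟨p, ξ⟩ ≥ 0}]. -/

import Mathlib

/-!
For each `ω` the integrand `q ↦ ⟪q, ξ ω⟫⁺` is `‖ξ ω‖`-Lipschitz, and it is differentiable at `p`
with gradient `1{⟪p, ξ ω⟫ ≥ 0} • ξ ω` whenever `⟪p, ξ ω⟫ ≠ 0`, i.e. almost surely. Since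
`‖ξ‖ ∈ L² ⊆ L¹` on a probability space, differentiation under the integral sign for locally
Lipschitz integrands with integrable Lipschitz constant gives the gradient of `ζ`.
-/

open MeasureTheory Filter Topology InnerProductSpace

lemma hasDerivAt_posPart {x : ℝ} (hx : x ≠ 0) :
    HasDerivAt (fun y : ℝ => y⁺) (if 0 ≤ x then 1 else 0) x := by
  rcases hx.lt_or_gt with hneg | hpos
  · rw [if_neg hneg.not_ge]
    refine (hasDerivAt_const x 0).congr_of_eventuallyEq ?_
    filter_upwards [eventually_lt_nhds hneg] with y hy
    exact posPart_eq_zero.2 hy.le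
  · rw [if_pos hpos.le]
    refine (hasDerivAt_id x).congr_of_eventuallyEq ?_
    filter_upwards [eventually_gt_nhds hpos] with y hy
    exact posPart_eq_self.2 hy.le

section

variable {E : Type*} [NormedAddCommGroup E] [InnerProductSpace ℝ E]

lemma lipschitzWith_posPart_inner (v : E) :
    LipschitzWith ‖v‖₊ (fun q : E => (⟪q, v⟫_ℝ)⁺) := by
  have hinner : LipschitzWith ‖v‖₊ (fun q : E => ⟪q, v⟫_ℝ) :=
    LipschitzWith.of_dist_le_mul fun q r => by
      rw [Real.dist_eq, dist_eq_norm, ← inner_sub_left, coe_nnnorm, mul_comm]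
      exact abs_real_inner_le_norm (q - r) v
  exact (lipschitzWith_posPart.comp hinner).weaken (one_mul _).le

lemma hasGradientAt_posPart_inner [CompleteSpace E] {p v : E} (h : ⟪p, v⟫_ℝ ≠ 0) :
    HasGradientAt (fun q : E => (⟪q, v⟫_ℝ)⁺) ((if 0 ≤ ⟪p, v⟫_ℝ then (1 : ℝ) else 0) • v) p := by
  rw [hasGradientAt_iff_hasFDerivAt]
  have hinner : HasFDerivAt (fun q : E => ⟪q, v⟫_ℝ) (innerSL ℝ v) p :=
    (innerSL ℝ v).hasFDerivAt.congr_of_eventuallyEq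
      (Eventually.of_forall fun q => real_inner_comm v q)
  refine ((hasDerivAt_posPart h).comp_hasFDerivAt p hinner).congr_fderiv ?_
  ext w
  split_ifs <;> simp

variable {Ω : Type*} [MeasurableSpace Ω] {μ : Measure Ω}

theorem hasGradientAt_integral_of_dominated_loc_of_lip [CompleteSpace E]
    {F : E → Ω → ℝ} {G : Ω → E} {x₀ : E} {bound : Ω → ℝ} {s : Set E}
    (hs : s ∈ 𝓝 x₀) (hF_meas : ∀ᶠ x in 𝓝 x₀, AEStronglyMeasurable (F x) μ)
    (hF_int : Integrable (F x₀) μ) (hG_meas : AEStronglyMeasurable G μ)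
    (h_lip : ∀ᵐ a ∂μ, LipschitzOnWith (Real.nnabs (bound a)) (F · a) s)
    (bound_integrable : Integrable bound μ)
    (h_diff : ∀ᵐ a ∂μ, HasGradientAt (F · a) (G a) x₀) :
    HasGradientAt (fun x => ∫ a, F x a ∂μ) (∫ a, G a ∂μ) x₀ := by
  set L := (toDual ℝ E).toLinearIsometry.toContinuousLinearMap
  obtain ⟨hL_int, hderiv⟩ := hasFDerivAt_integral_of_dominated_loc_of_lip (F' := fun a => L (G a))
    hs hF_meas hF_int (L.continuous.comp_aestronglyMeasurable hG_meas) h_lip bound_integrable h_diff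
  have hG_int : Integrable G μ :=
    (integrable_norm_iff hG_meas).1 (by simpa [L] using hL_int.norm)
  rw [L.integral_comp_commSL (by simp) hG_int] at hderiv
  exact hderiv

theorem hasGradientAt_integral_posPart_inner [CompleteSpace E] {ξ : Ω → E} (hξ : Integrable ξ μ)
    {p : E} (hp : μ {ω | ⟪p, ξ ω⟫_ℝ = 0} = 0) :
    HasGradientAt (fun q => ∫ ω, (⟪q, ξ ω⟫_ℝ)⁺ ∂μ)
      (∫ ω, (if 0 ≤ ⟪p, ξ ω⟫_ℝ then (1 : ℝ) else 0) • ξ ω ∂μ) p := by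
  have hstep : Measurable fun x : ℝ => if 0 ≤ x then (1 : ℝ) else 0 :=
    Measurable.ite measurableSet_Ici measurable_const measurable_const
  refine hasGradientAt_integral_of_dominated_loc_of_lip (bound := fun ω => ‖ξ ω‖)
    univ_mem (Eventually.of_forall fun q => (hξ.const_inner q).pos_part.aestronglyMeasurable)
    (hξ.const_inner p).pos_part
    ((hstep.comp_aemeasurable (hξ.const_inner p).aemeasurable).aestronglyMeasurable.smul
      hξ.aestronglyMeasurable)
    (ae_of_all _ fun ω => ?_) hξ.norm ?_
  · simpa using (lipschitzWith_posPart_inner (ξ ω)).lipschitzOnWith (s := Set.univ)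
  · filter_upwards [measure_eq_zero_iff_ae_notMem.1 hp] with ω hω
    exact hasGradientAt_posPart_inner hω

end

theorem stmt6 {Ω : Type*} [MeasurableSpace Ω] (P : Measure Ω) [IsProbabilityMeasure P]
    {ℓ : ℕ} (ξ : Ω → EuclideanSpace ℝ (Fin ℓ)) (hmeas : Measurable ξ)
    (hL2 : Integrable (fun ω => ‖ξ ω‖ ^ 2) P)
    (hzero : ∀ p : EuclideanSpace ℝ (Fin ℓ), p ≠ 0 →
      P {ω | (inner ℝ p (ξ ω) : ℝ) = 0} = 0)
    (p : EuclideanSpace ℝ (Fin ℓ)) (hp : p ≠ 0) :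
    HasGradientAt
      (fun q : EuclideanSpace ℝ (Fin ℓ) =>
        ∫ ω, (if 0 ≤ (inner ℝ q (ξ ω) : ℝ) then (inner ℝ q (ξ ω) : ℝ) else 0) ∂P)
      (∫ ω, (if 0 ≤ (inner ℝ p (ξ ω) : ℝ) then (1 : ℝ) else 0) • ξ ω ∂P) p := by
  have hξ : Integrable ξ P :=
    ((memLp_two_iff_integrable_sq_norm hmeas.aestronglyMeasurable).2 hL2).integrable one_le_two
  simpa only [posPart_eq_ite] using hasGradientAt_integral_posPart_inner hξ (hzero p hp)
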